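/- Fix an integer d ≥ 3. There exist constants c, C > 0 depending only on d such that for all integers ℓ ≥ 1, all z ∈ ℂ with Im z > 0, and all Δ, Δ′ ∈ ℂ with Im Δ > 0, Im Δ′ > 0, ℓ²·|Δ − m_sc(z)| ≤ c and ℓ²·|Δ′ − m_sc(z)| ≤ c, one has |Y_ℓ(Δ,z) − Y_ℓ(Δ′,z)| ≤ C·ℓ·|Δ − Δ′|, where Y_ℓ(Δ,z) := ((H_{𝒴_ℓ} − z·I − Δ·𝕀∂)⁻¹)_{oo}. -/

import Mathlib

open scoped Classical

noncomputable section

/-- Vertices of the ball of radius `ℓ` in the infinite `m`-ary rooted tree: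
words over `Fin m` of length at most `ℓ`. -/
def TreeBallY (m ℓ : ℕ) : Type := {l : List (Fin m) // l.length ≤ ℓ}

instance (m ℓ : ℕ) : DecidableEq (TreeBallY m ℓ) :=
  inferInstanceAs (DecidableEq {l : List (Fin m) // l.length ≤ ℓ})

instance (m ℓ : ℕ) : Fintype (TreeBallY m ℓ) :=
  Fintype.ofSurjective
    (fun p : (Σ k : Fin (ℓ + 1), List.Vector (Fin m) k) =>
      (⟨p.2.toList, by
        have h1 : p.2.toList.length = (p.1 : ℕ) := p.2.toList_length
        have h2 := p.1.isLt
        omega⟩ : TreeBallY m ℓ))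
    (fun l => ⟨⟨⟨l.1.length, Nat.lt_succ_of_le l.2⟩, ⟨l.1, rfl⟩⟩, rfl⟩)

/-- The tree structure on the ball of radius `ℓ` of the `m`-ary rooted tree:
`x` is adjacent to `y` iff one of them is obtained from the other by appending one letter
(i.e. one is the parent of the other). -/
def treeGraphY (m ℓ : ℕ) : SimpleGraph (TreeBallY m ℓ) :=
  SimpleGraph.fromRel (fun x y => ∃ a : Fin m, y.1 = x.1 ++ [a])

/-- The root of the tree: the empty word. -/
def rootY (m ℓ : ℕ) : TreeBallY m ℓ := ⟨[], Nat.zero_le _⟩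

/-- The normalized adjacency matrix `A/√(d-1)` of the ball `𝒴_ℓ` of radius `ℓ` in the
infinite `(d-1)`-ary tree. -/
def HmatY (d ℓ : ℕ) : Matrix (TreeBallY (d - 1) ℓ) (TreeBallY (d - 1) ℓ) ℂ :=
  fun x y => if (treeGraphY (d - 1) ℓ).Adj x y then (Real.sqrt ((d : ℝ) - 1) : ℂ)⁻¹ else 0

/-- The leaf indicator `𝕀∂` of `𝒴_ℓ`: the diagonal 0-1 matrix whose entry at `x` is `1`
exactly when `dist(x, o) = ℓ`. -/
def IbdY (d ℓ : ℕ) : Matrix (TreeBallY (d - 1) ℓ) (TreeBallY (d - 1) ℓ) ℂ :=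
  Matrix.diagonal (fun x => if (treeGraphY (d - 1) ℓ).dist (rootY (d - 1) ℓ) x = ℓ then 1 else 0)

/-- Vertices of the ball `𝒳_ℓ` of radius `ℓ` in the infinite `d`-regular tree: the root
(`none`), or a first step in `Fin d` followed by a word over `Fin (d-1)` of length at most
`ℓ - 1`. -/
def TreeBallX (d ℓ : ℕ) : Type := Option (Fin d × TreeBallY (d - 1) (ℓ - 1))

instance (d ℓ : ℕ) : DecidableEq (TreeBallX d ℓ) :=
  inferInstanceAs (DecidableEq (Option (Fin d × TreeBallY (d - 1) (ℓ - 1))))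

instance (d ℓ : ℕ) : Fintype (TreeBallX d ℓ) :=
  inferInstanceAs (Fintype (Option (Fin d × TreeBallY (d - 1) (ℓ - 1))))

/-- The tree structure on the ball `𝒳_ℓ` of radius `ℓ` of the `d`-regular tree: the root is
adjacent to the `d` one-step vertices, and within each branch two vertices are adjacent iff one
is the parent of the other. -/
def treeGraphX (d ℓ : ℕ) : SimpleGraph (TreeBallX d ℓ) :=
  SimpleGraph.fromRel (fun x y =>
    (∃ a : Fin d, x = none ∧ y = some (a, ⟨[], Nat.zero_le _⟩)) ∨
    (∃ (a : Fin d) (s t : TreeBallY (d - 1) (ℓ - 1)),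
      x = some (a, s) ∧ y = some (a, t) ∧ ∃ b : Fin (d - 1), t.1 = s.1 ++ [b]))

/-- The root of the `d`-regular tree ball `𝒳_ℓ`. -/
def rootX (d ℓ : ℕ) : TreeBallX d ℓ := none

/-- The normalized adjacency matrix `A/√(d-1)` of the ball `𝒳_ℓ` of radius `ℓ` in the
infinite `d`-regular tree. -/
def HmatX (d ℓ : ℕ) : Matrix (TreeBallX d ℓ) (TreeBallX d ℓ) ℂ :=
  fun x y => if (treeGraphX d ℓ).Adj x y then (Real.sqrt ((d : ℝ) - 1) : ℂ)⁻¹ else 0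

/-- The leaf indicator `𝕀∂` of `𝒳_ℓ`. -/
def IbdX (d ℓ : ℕ) : Matrix (TreeBallX d ℓ) (TreeBallX d ℓ) ℂ :=
  Matrix.diagonal (fun x => if (treeGraphX d ℓ).dist (rootX d ℓ) x = ℓ then 1 else 0)

/-- Longest common prefix of two words. -/
def lcp {m : ℕ} : List (Fin m) → List (Fin m) → List (Fin m)
  | [], _ => []
  | _ :: _, [] => []
  | a :: s, b :: t => if a = b then a :: lcp s t else []

theorem lcp_length_le_left {m : ℕ} : ∀ s t : List (Fin m), (lcp s t).length ≤ s.length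
  | [], _ => by simp [lcp]
  | _ :: _, [] => by simp [lcp]
  | a :: s, b :: t => by
    by_cases h : a = b
    · simp only [lcp, if_pos h, List.length_cons]
      exact Nat.succ_le_succ (lcp_length_le_left s t)
    · simp [lcp, h]

/-- The least common ancestor of two vertices of `𝒴_ℓ`: their longest common prefix. -/
def lcaY {m ℓ : ℕ} (x y : TreeBallY m ℓ) : TreeBallY m ℓ :=
  ⟨lcp x.1 y.1, le_trans (lcp_length_le_left _ _) x.2⟩

/-- `anc(x,y)`: the distance from the least common ancestor of `x` and `y` to the root `o`. -/
def ancY {m ℓ : ℕ} (x y : TreeBallY m ℓ) : ℕ :=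
  (treeGraphY m ℓ).dist (rootY m ℓ) (lcaY x y)

end

/-!
The ball `𝒴_ℓ` is spherically symmetric about `o`, so the column `(M⁻¹)_{· o}` of
`M = H - z - Δ 𝕀∂` is a function of the depth alone. Solving the resulting three-term
recurrence from the leaves inwards (where `σ² (d - 1) = 1` for `σ = 1/√(d-1)` makes every
Schur-complement step the same Möbius map) gives `Y_ℓ(Δ, z) = w_{ℓ+1}`, where `w₀ = Δ` and
`w_{n+1} = -(z + w_n)⁻¹`. `M` is invertible because `Im ⟨v, M v⟩ < 0` for `v ≠ 0`.

`m_sc` is the fixed point of this map and `|m_sc| < 1`, so when `ℓ² |Δ - m_sc| ≤ 1/4` the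
iterates `w_j`, `j ≤ ℓ + 1`, stay within `1/(2ℓ²)` of `m_sc`. Telescoping,
`w_{ℓ+1} - w'_{ℓ+1} = (Δ - Δ') ∏_{1 ≤ j ≤ ℓ+1} w_j w'_j`, and the product is at most
`(1 + 1/(2ℓ²))^{2(ℓ+1)} ≤ e² < 9`.
-/

open Finset Matrix
open scoped ComplexOrder

noncomputable section

-- In terms of `1 / a`: the hypothesis says `1 / a (n + 1) ≥ 1 / a n - 1`, the conclusion
-- `1 / a n ≥ 1 / δ - n`.
lemma mul_one_sub_nat_mul_le_of_le_mul_one_add {a : ℕ → ℝ} {δ : ℝ} (ha : ∀ n, 0 ≤ a n)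
    (h0 : a 0 ≤ δ) (hrec : ∀ n, a (n + 1) ≤ a n * (1 + a (n + 1))) :
    ∀ n : ℕ, n * δ ≤ 1 → a n * (1 - n * δ) ≤ δ
  | 0, _ => by simpa using h0
  | n + 1, hn => by
    have hδ : 0 ≤ δ := (ha 0).trans h0
    push_cast at hn ⊢
    have hn' : 0 ≤ 1 - n * δ := by nlinarith
    have ih := mul_one_sub_nat_mul_le_of_le_mul_one_add ha h0 hrec n (by linarith)
    nlinarith [mul_le_mul_of_nonneg_right (hrec n) hn',
      mul_le_mul_of_nonneg_right ih (add_nonneg zero_le_one (ha (n + 1)))]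

def mobiusIter (z Δ : ℂ) : ℕ → ℂ
  | 0 => Δ
  | n + 1 => -(z + mobiusIter z Δ n)⁻¹

section MobiusIter

variable {z Δ Δ' m : ℂ}

@[simp] lemma mobiusIter_zero (z Δ : ℂ) : mobiusIter z Δ 0 = Δ := rfl

@[simp] lemma mobiusIter_succ (z Δ : ℂ) (n : ℕ) :
    mobiusIter z Δ (n + 1) = -(z + mobiusIter z Δ n)⁻¹ := rfl

lemma im_neg_inv_pos {w : ℂ} (hw : 0 < w.im) : 0 < (-w⁻¹).im := by
  have hw0 : w ≠ 0 := by rintro rfl; simp at hw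
  rw [Complex.neg_im, Complex.inv_im, neg_div, neg_neg]
  exact div_pos hw (Complex.normSq_pos.2 hw0)

lemma im_mobiusIter_pos (hz : 0 < z.im) (hΔ : 0 < Δ.im) : ∀ n, 0 < (mobiusIter z Δ n).im
  | 0 => hΔ
  | n + 1 => im_neg_inv_pos (by simpa using add_pos hz (im_mobiusIter_pos hz hΔ n))

lemma add_mobiusIter_ne_zero (hz : 0 < z.im) (hΔ : 0 < Δ.im) (n : ℕ) :
    z + mobiusIter z Δ n ≠ 0 := by
  intro h
  have := add_pos hz (im_mobiusIter_pos hz hΔ n)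
  rw [← Complex.add_im, h] at this
  simp at this

lemma mobiusIter_succ_mul_add (hz : 0 < z.im) (hΔ : 0 < Δ.im) (n : ℕ) :
    mobiusIter z Δ (n + 1) * (z + mobiusIter z Δ n) = -1 := by
  rw [mobiusIter_succ, neg_mul, inv_mul_cancel₀ (add_mobiusIter_ne_zero hz hΔ n)]

lemma mobiusIter_succ_sub_succ (hz : 0 < z.im) (hΔ : 0 < Δ.im) (hΔ' : 0 < Δ'.im) (n : ℕ) :
    mobiusIter z Δ (n + 1) - mobiusIter z Δ' (n + 1) =
      (mobiusIter z Δ n - mobiusIter z Δ' n) *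
        (mobiusIter z Δ (n + 1) * mobiusIter z Δ' (n + 1)) := by
  have ha := add_mobiusIter_ne_zero hz hΔ n
  have hb := add_mobiusIter_ne_zero hz hΔ' n
  simp only [mobiusIter_succ]
  field_simp
  ring

lemma mobiusIter_sub_eq_prod (hz : 0 < z.im) (hΔ : 0 < Δ.im) (hΔ' : 0 < Δ'.im) (n : ℕ) :
    mobiusIter z Δ n - mobiusIter z Δ' n =
      (Δ - Δ') * ∏ j ∈ range n, (mobiusIter z Δ (j + 1) * mobiusIter z Δ' (j + 1)) := by
  induction n with
  | zero => simp
  | succ n ih => rw [prod_range_succ, mobiusIter_succ_sub_succ hz hΔ hΔ', ih, mul_assoc]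

lemma add_ne_zero_of_sq_add_mul_add_one_eq_zero (hm : m ^ 2 + z * m + 1 = 0) : z + m ≠ 0 := by
  intro h
  have : m * (z + m) = -1 := by linear_combination hm
  rw [h, mul_zero] at this
  norm_num at this

lemma neg_inv_add_eq_self (hm : m ^ 2 + z * m + 1 = 0) : -(z + m)⁻¹ = m := by
  have := add_ne_zero_of_sq_add_mul_add_one_eq_zero hm
  field_simp
  linear_combination -hm

lemma mobiusIter_eq_self (hm : m ^ 2 + z * m + 1 = 0) : ∀ n, mobiusIter z m n = m
  | 0 => rfl
  | n + 1 => by rw [mobiusIter_succ, mobiusIter_eq_self hm n, neg_inv_add_eq_self hm]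

lemma norm_lt_one_of_sq_add_mul_add_one_eq_zero (hz : 0 < z.im) (hm : m ^ 2 + z * m + 1 = 0)
    (hmi : 0 < m.im) : ‖m‖ < 1 := by
  have hq : 0 < Complex.normSq (z + m) :=
    Complex.normSq_pos.2 (add_ne_zero_of_sq_add_mul_add_one_eq_zero hm)
  have him : m.im * Complex.normSq (z + m) = z.im + m.im := by
    have h := congrArg Complex.im (neg_inv_add_eq_self hm)
    rw [Complex.neg_im, Complex.inv_im, Complex.add_im] at h
    field_simp at h
    linarith
  have hprod : ‖m‖ * ‖z + m‖ = 1 := by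
    rw [← norm_mul, show m * (z + m) = -1 by linear_combination hm, norm_neg, norm_one]
  have : 1 < ‖z + m‖ := by
    rw [Complex.normSq_eq_norm_sq] at him
    by_contra! h
    have : ‖z + m‖ ^ 2 ≤ 1 := by nlinarith [norm_nonneg (z + m)]
    nlinarith
  nlinarith [norm_nonneg m]

lemma norm_mobiusIter_sub_le (hz : 0 < z.im) (hΔ : 0 < Δ.im) (hm : m ^ 2 + z * m + 1 = 0)
    (hmi : 0 < m.im) {n : ℕ} (hn : n * ‖Δ - m‖ ≤ 1 / 2) :
    ‖mobiusIter z Δ n - m‖ ≤ 2 * ‖Δ - m‖ := by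
  have hm1 := (norm_lt_one_of_sq_add_mul_add_one_eq_zero hz hm hmi).le
  have hrec (j : ℕ) : ‖mobiusIter z Δ (j + 1) - m‖ ≤
      ‖mobiusIter z Δ j - m‖ * (1 + ‖mobiusIter z Δ (j + 1) - m‖) := by
    have hstep := mobiusIter_succ_sub_succ hz hΔ hmi j
    simp only [mobiusIter_eq_self hm] at hstep
    have hw : ‖mobiusIter z Δ (j + 1)‖ * ‖m‖ ≤ 1 + ‖mobiusIter z Δ (j + 1) - m‖ :=
      calc ‖mobiusIter z Δ (j + 1)‖ * ‖m‖ ≤ ‖mobiusIter z Δ (j + 1)‖ :=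
            mul_le_of_le_one_right (norm_nonneg _) hm1
        _ ≤ ‖m‖ + ‖mobiusIter z Δ (j + 1) - m‖ := norm_le_norm_add_norm_sub' _ _
        _ ≤ 1 + ‖mobiusIter z Δ (j + 1) - m‖ := by linarith
    calc ‖mobiusIter z Δ (j + 1) - m‖
        = ‖mobiusIter z Δ j - m‖ * (‖mobiusIter z Δ (j + 1)‖ * ‖m‖) := by
          rw [hstep, norm_mul, norm_mul]
      _ ≤ ‖mobiusIter z Δ j - m‖ * (1 + ‖mobiusIter z Δ (j + 1) - m‖) := by gcongr
  have key := mul_one_sub_nat_mul_le_of_le_mul_one_add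
    (a := fun j => ‖mobiusIter z Δ j - m‖) (δ := ‖Δ - m‖) (fun _ => norm_nonneg _) le_rfl hrec
    n (by linarith)
  nlinarith [norm_nonneg (mobiusIter z Δ n - m)]

lemma one_add_inv_sq_pow_le_nine {ℓ : ℕ} (hℓ : 1 ≤ ℓ) :
    ((1 + 1 / (2 * (ℓ : ℝ) ^ 2)) ^ 2) ^ (ℓ + 1) ≤ 9 := by
  have hℓR : (1 : ℝ) ≤ ℓ := by exact_mod_cast hℓ
  set t : ℝ := 1 / (2 * (ℓ : ℝ) ^ 2)
  have hexp : (2 * (ℓ + 1) : ℕ) * t ≤ 2 := by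
    push_cast
    rw [mul_one_div, div_le_iff₀ (by positivity)]
    nlinarith
  calc ((1 + t) ^ 2) ^ (ℓ + 1) = (1 + t) ^ (2 * (ℓ + 1)) := by rw [← pow_mul]
    _ ≤ Real.exp t ^ (2 * (ℓ + 1)) := by
        gcongr
        linarith [Real.add_one_le_exp t]
    _ = Real.exp ((2 * (ℓ + 1) : ℕ) * t) := by rw [← Real.exp_nat_mul]
    _ ≤ Real.exp 1 * Real.exp 1 := by rw [← Real.exp_add]; gcongr; linarith
    _ ≤ 9 := by nlinarith [Real.exp_one_lt_d9, Real.exp_pos 1]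

lemma norm_mobiusIter_sub_mobiusIter_le (hz : 0 < z.im) (hΔ : 0 < Δ.im) (hΔ' : 0 < Δ'.im)
    (hm : m ^ 2 + z * m + 1 = 0) (hmi : 0 < m.im) {ℓ : ℕ} (hℓ : 1 ≤ ℓ)
    (hc : (ℓ : ℝ) ^ 2 * ‖Δ - m‖ ≤ 1 / 4)
    (hc' : (ℓ : ℝ) ^ 2 * ‖Δ' - m‖ ≤ 1 / 4) :
    ‖mobiusIter z Δ (ℓ + 1) - mobiusIter z Δ' (ℓ + 1)‖ ≤ 9 * ‖Δ - Δ'‖ := by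
  have hℓR : (1 : ℝ) ≤ ℓ := by exact_mod_cast hℓ
  have hm1 := (norm_lt_one_of_sq_add_mul_add_one_eq_zero hz hm hmi).le
  have hnorm {D : ℂ} (hD : 0 < D.im) (hcD : (ℓ : ℝ) ^ 2 * ‖D - m‖ ≤ 1 / 4) {j : ℕ}
      (hj : j ≤ ℓ + 1) : ‖mobiusIter z D j‖ ≤ 1 + 1 / (2 * (ℓ : ℝ) ^ 2) := by
    have hjR : (j : ℝ) ≤ 2 * ℓ ^ 2 := by
      have : (j : ℝ) ≤ ℓ + 1 := by exact_mod_cast hj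
      nlinarith
    have hclose := norm_mobiusIter_sub_le hz hD hm hmi (n := j)
      (by nlinarith [mul_le_mul_of_nonneg_right hjR (norm_nonneg (D - m))])
    have : 2 * ‖D - m‖ ≤ 1 / (2 * (ℓ : ℝ) ^ 2) := by
      rw [le_div_iff₀ (by positivity)]; linarith
    linarith [norm_le_norm_add_norm_sub' (mobiusIter z D j) m]
  rw [mobiusIter_sub_eq_prod hz hΔ hΔ', norm_mul, norm_prod, mul_comm]
  gcongr
  calc ∏ j ∈ range (ℓ + 1), ‖mobiusIter z Δ (j + 1) * mobiusIter z Δ' (j + 1)‖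
      ≤ ∏ _j ∈ range (ℓ + 1), (1 + 1 / (2 * (ℓ : ℝ) ^ 2)) ^ 2 := by
        gcongr with j hj
        rw [norm_mul, sq]
        have hj' : j + 1 ≤ ℓ + 1 := by simpa using hj
        exact mul_le_mul (hnorm hΔ hc hj') (hnorm hΔ' hc' hj') (norm_nonneg _)
          (by positivity)
    _ ≤ 9 := by rw [prod_const, card_range]; exact one_add_inv_sq_pow_le_nine hℓ

end MobiusIter

section TreeBallY

variable {m ℓ : ℕ}

lemma TreeBallY.ext_iff {x y : TreeBallY m ℓ} : x = y ↔ x.1 = y.1 := Subtype.ext_iff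

lemma eq_rootY_iff {x : TreeBallY m ℓ} : x = rootY m ℓ ↔ x.1.length = 0 := by
  rw [TreeBallY.ext_iff, rootY, List.length_eq_zero_iff]

lemma treeGraphY_adj_iff {x y : TreeBallY m ℓ} :
    (treeGraphY m ℓ).Adj x y ↔ (∃ a, y.1 = x.1 ++ [a]) ∨ ∃ a, x.1 = y.1 ++ [a] := by
  rw [treeGraphY, SimpleGraph.fromRel_adj, and_iff_right_iff_imp]
  rintro (⟨a, h⟩ | ⟨a, h⟩) rfl <;> simpa using congrArg List.length h

lemma length_le_length_add_length_walk {u v : TreeBallY m ℓ} (p : (treeGraphY m ℓ).Walk u v) :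
    v.1.length ≤ u.1.length + p.length := by
  induction p with
  | nil => simp
  | cons h p ih =>
    rw [SimpleGraph.Walk.length_cons]
    rcases treeGraphY_adj_iff.1 h with ⟨a, ha⟩ | ⟨a, ha⟩ <;>
    · have := congrArg List.length ha
      simp only [List.length_append, List.length_singleton] at this
      omega

lemma exists_walk_rootY_length_eq (l : List (Fin m)) (hl : l.length ≤ ℓ) :
    ∃ p : (treeGraphY m ℓ).Walk (rootY m ℓ) ⟨l, hl⟩, p.length = l.length := by
  induction l using List.reverseRecOn with
  | nil => exact ⟨.nil, rfl⟩
  | append_singleton l a ih =>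
    have hl' : l.length ≤ ℓ := by simp at hl; omega
    obtain ⟨p, hp⟩ := ih hl'
    have hadj : (treeGraphY m ℓ).Adj ⟨l, hl'⟩ ⟨l ++ [a], hl⟩ :=
      treeGraphY_adj_iff.2 (.inl ⟨a, rfl⟩)
    exact ⟨p.concat hadj, (SimpleGraph.Walk.length_concat p hadj).trans (by simp [hp])⟩

lemma treeGraphY_dist_rootY (x : TreeBallY m ℓ) :
    (treeGraphY m ℓ).dist (rootY m ℓ) x = x.1.length := by
  obtain ⟨p, hp⟩ := exists_walk_rootY_length_eq x.1 x.2
  refine le_antisymm (hp ▸ SimpleGraph.dist_le p) ?_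
  obtain ⟨q, hq⟩ := p.reachable.exists_walk_length_eq_dist
  have := length_le_length_add_length_walk q
  rw [hq] at this
  simp only [rootY, List.length_nil, zero_add] at this
  exact this

lemma sum_parent_radial (x : TreeBallY m ℓ) (f : ℕ → ℂ) :
    ∑ y : TreeBallY m ℓ, (if ∃ a, x.1 = y.1 ++ [a] then f y.1.length else 0) =
      if x.1.length = 0 then 0 else f (x.1.length - 1) := by
  split_ifs with hx
  · refine sum_eq_zero fun y _ => if_neg ?_
    rintro ⟨a, ha⟩
    simpa [hx] using congrArg List.length ha
  · have hne : x.1 ≠ [] := by simpa using hx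
    let p : TreeBallY m ℓ :=
      ⟨x.1.dropLast, by have := x.2; simp only [List.length_dropLast]; omega⟩
    have hp (y : TreeBallY m ℓ) : (∃ a, x.1 = y.1 ++ [a]) ↔ y = p := by
      constructor
      · rintro ⟨a, ha⟩
        exact Subtype.ext (by simp [p, ha])
      · rintro rfl
        exact ⟨x.1.getLast hne, (List.dropLast_append_getLast hne).symm⟩
    simp_rw [hp, Fintype.sum_ite_eq']
    simp [p]

lemma sum_children_radial (x : TreeBallY m ℓ) (f : ℕ → ℂ) :
    ∑ y : TreeBallY m ℓ, (if ∃ a, y.1 = x.1 ++ [a] then f y.1.length else 0) =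
      if x.1.length < ℓ then m * f (x.1.length + 1) else 0 := by
  split_ifs with hx
  · let child (a : Fin m) : TreeBallY m ℓ := ⟨x.1 ++ [a], by simp; omega⟩
    have hinj : Function.Injective child := fun a b h => by
      simpa [child] using TreeBallY.ext_iff.1 h
    have hchild :
        univ.filter (fun y : TreeBallY m ℓ => ∃ a, y.1 = x.1 ++ [a]) = univ.image child := by
      ext y
      simp only [mem_filter, mem_image, mem_univ, true_and]
      exact exists_congr fun a => by rw [eq_comm, TreeBallY.ext_iff]
    rw [← sum_filter, hchild, sum_image fun a _ b _ h => hinj h]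
    simp [child]
  · refine sum_eq_zero fun y _ => if_neg ?_
    rintro ⟨a, ha⟩
    have := congrArg List.length ha
    have := y.2
    simp at *
    omega

lemma sum_adj_radial (x : TreeBallY m ℓ) (f : ℕ → ℂ) :
    ∑ y : TreeBallY m ℓ, (if (treeGraphY m ℓ).Adj x y then f y.1.length else 0) =
      (if x.1.length = 0 then 0 else f (x.1.length - 1)) +
        if x.1.length < ℓ then m * f (x.1.length + 1) else 0 := by
  rw [← sum_parent_radial, ← sum_children_radial, ← sum_add_distrib]
  refine sum_congr rfl fun y _ => ?_
  have hexcl : ¬ ((∃ a, x.1 = y.1 ++ [a]) ∧ ∃ a, y.1 = x.1 ++ [a]) := by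
    rintro ⟨⟨a, ha⟩, ⟨b, hb⟩⟩
    simpa [hb] using congrArg List.length ha
  rw [treeGraphY_adj_iff]
  split_ifs <;> (try simp) <;> tauto

end TreeBallY

lemma det_sub_smul_one_sub_smul_ne_zero {n : Type*} [Fintype n] [DecidableEq n]
    {H D : Matrix n n ℂ} (hH : H.IsHermitian) (hD : D.PosSemidef) {z Δ : ℂ} (hz : 0 < z.im)
    (hΔ : 0 ≤ Δ.im) : (H - z • 1 - Δ • D).det ≠ 0 := by
  intro hdet
  obtain ⟨v, hv0, hv⟩ := exists_mulVec_eq_zero_iff.2 hdet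
  have hHv := hH.im_star_dotProduct_mulVec_self v
  have hpos : 0 < star v ⬝ᵥ v := by
    simpa only [one_mulVec] using (PosDef.one (n := n) (R := ℂ)).dotProduct_mulVec_pos hv0
  obtain ⟨hvv_re, hvv_im⟩ := Complex.pos_iff.1 hpos
  obtain ⟨hDv_re, hDv_im⟩ := Complex.nonneg_iff.1 (hD.dotProduct_mulVec_nonneg v)
  have h := congrArg (fun w => (star v ⬝ᵥ w).im) hv
  simp only [sub_mulVec, smul_mulVec, one_mulVec, dotProduct_sub, dotProduct_smul, smul_eq_mul,
    Complex.sub_im, Complex.mul_im, dotProduct_zero, Complex.zero_im] at h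
  rw [RCLike.im_to_complex] at hHv
  rw [← hvv_im, ← hDv_im] at h
  nlinarith [mul_nonneg hΔ hDv_re]

lemma HmatY_isHermitian (d ℓ : ℕ) : (HmatY d ℓ).IsHermitian := by
  ext x y
  simp only [conjTranspose_apply, HmatY, (treeGraphY (d - 1) ℓ).adj_comm y x]
  split_ifs <;> simp [Complex.conj_ofReal]

lemma IbdY_posSemidef (d ℓ : ℕ) : (IbdY d ℓ).PosSemidef :=
  PosSemidef.diagonal fun _ => by dsimp only; split_ifs <;> norm_num

lemma HmatY_mulVec_radial (d ℓ : ℕ) (f : ℕ → ℂ) (x : TreeBallY (d - 1) ℓ) :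
    (HmatY d ℓ *ᵥ fun y => f y.1.length) x =
      (√((d : ℝ) - 1) : ℂ)⁻¹ * ((if x.1.length = 0 then 0 else f (x.1.length - 1)) +
        if x.1.length < ℓ then ((d - 1 : ℕ) : ℂ) * f (x.1.length + 1) else 0) := by
  rw [← sum_adj_radial, mul_sum]
  refine sum_congr rfl fun y _ => ?_
  simp only [HmatY]
  split_ifs <;> simp

lemma IbdY_mulVec (d ℓ : ℕ) (v : TreeBallY (d - 1) ℓ → ℂ) (x : TreeBallY (d - 1) ℓ) :
    (IbdY d ℓ *ᵥ v) x = if x.1.length = ℓ then v x else 0 := by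
  rw [IbdY, mulVec_diagonal, treeGraphY_dist_rootY, ite_mul, one_mul, zero_mul]

/-- The root column `x ↦ (M⁻¹)_{x o}` of `M = H - z - Δ 𝕀∂` depends only on the depth `k`
of `x`; these are its values, built from the leaves inwards. -/
def radialColumn (z Δ σ : ℂ) (ℓ : ℕ) : ℕ → ℂ
  | 0 => mobiusIter z Δ (ℓ + 1)
  | k + 1 => -σ * mobiusIter z Δ (ℓ - k) * radialColumn z Δ σ ℓ k

lemma radialColumn_equation {z Δ σ c : ℂ} {ℓ k : ℕ} (hz : 0 < z.im) (hΔ : 0 < Δ.im)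
    (hσ : σ ^ 2 * c = 1) (hk : k ≤ ℓ) :
    σ * ((if k = 0 then 0 else radialColumn z Δ σ ℓ (k - 1)) +
        if k < ℓ then c * radialColumn z Δ σ ℓ (k + 1) else 0) -
      z * radialColumn z Δ σ ℓ k - Δ * (if k = ℓ then radialColumn z Δ σ ℓ k else 0) =
      if k = 0 then 1 else 0 := by
  set F := radialColumn z Δ σ ℓ
  set w := mobiusIter z Δ
  have hchild : σ * (if k < ℓ then c * F (k + 1) else 0) - Δ * (if k = ℓ then F k else 0) =
      -(w (ℓ - k) * F k) := by
    rcases hk.lt_or_eq with hk | rfl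
    · rw [if_pos hk, if_neg hk.ne]
      simp only [F, radialColumn]
      linear_combination (-w (ℓ - k) * F k) * hσ
    · simp [w]
  have hparent : σ * (if k = 0 then 0 else F (k - 1)) - (z + w (ℓ - k)) * F k =
      if k = 0 then 1 else 0 := by
    obtain _ | j := k
    · simp only [if_true, F, radialColumn]
      linear_combination -mobiusIter_succ_mul_add hz hΔ ℓ
    · have hℓj : ℓ - j = ℓ - (j + 1) + 1 := by omega
      simp only [F, radialColumn, hℓj, Nat.add_sub_cancel, add_eq_zero, one_ne_zero, and_false,
        if_false]
      linear_combination σ * F j * mobiusIter_succ_mul_add hz hΔ (ℓ - (j + 1))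
  linear_combination hchild + hparent

lemma inv_sqrt_sq_mul_natCast_sub_one {d : ℕ} (hd : 2 ≤ d) :
    (√((d : ℝ) - 1) : ℂ)⁻¹ ^ 2 * ((d - 1 : ℕ) : ℂ) = 1 := by
  have hd' : (1 : ℝ) < d := by exact_mod_cast hd
  rw [inv_pow, ← Complex.ofReal_pow, Real.sq_sqrt (by linarith), Nat.cast_sub (by omega)]
  have : (d : ℂ) - 1 ≠ 0 := by exact_mod_cast (sub_pos.2 hd').ne'
  push_cast
  field_simp

lemma resolvent_mulVec_radialColumn {d ℓ : ℕ} (hd : 2 ≤ d) {z Δ : ℂ} (hz : 0 < z.im)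
    (hΔ : 0 < Δ.im) :
    (HmatY d ℓ - z • 1 - Δ • IbdY d ℓ) *ᵥ
        (fun x => radialColumn z Δ (√((d : ℝ) - 1) : ℂ)⁻¹ ℓ x.1.length) =
      Pi.single (rootY (d - 1) ℓ) 1 := by
  funext x
  rw [sub_mulVec, sub_mulVec, smul_mulVec, one_mulVec, smul_mulVec, Pi.sub_apply, Pi.sub_apply,
    Pi.smul_apply, Pi.smul_apply, HmatY_mulVec_radial, IbdY_mulVec, Pi.single_apply, smul_eq_mul,
    smul_eq_mul]
  simp only [eq_rootY_iff]
  exact radialColumn_equation hz hΔ (inv_sqrt_sq_mul_natCast_sub_one hd) x.2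

lemma resolvent_rootY_rootY {d ℓ : ℕ} (hd : 2 ≤ d) {z Δ : ℂ} (hz : 0 < z.im)
    (hΔ : 0 < Δ.im) :
    (HmatY d ℓ - z • 1 - Δ • IbdY d ℓ)⁻¹ (rootY (d - 1) ℓ) (rootY (d - 1) ℓ) =
      mobiusIter z Δ (ℓ + 1) := by
  set M := HmatY d ℓ - z • 1 - Δ • IbdY d ℓ
  have hM : IsUnit M.det := isUnit_iff_ne_zero.2 <|
    det_sub_smul_one_sub_smul_ne_zero (HmatY_isHermitian d ℓ) (IbdY_posSemidef d ℓ) hz hΔ.le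
  calc M⁻¹ (rootY (d - 1) ℓ) (rootY (d - 1) ℓ)
      = (M⁻¹ *ᵥ Pi.single (rootY (d - 1) ℓ) 1) (rootY (d - 1) ℓ) := by
        rw [mulVec_single_one]; rfl
    _ = (M⁻¹ *ᵥ M *ᵥ fun x =>
          radialColumn z Δ (√((d : ℝ) - 1) : ℂ)⁻¹ ℓ x.1.length) (rootY (d - 1) ℓ) := by
        rw [resolvent_mulVec_radialColumn hd hz hΔ]
    _ = mobiusIter z Δ (ℓ + 1) := by rw [mulVec_mulVec, nonsing_inv_mul _ hM, one_mulVec]; rfl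

end

/-- **Lipschitz bound for `Y_ℓ` in the boundary weight.** Fix `d ≥ 3`. There are constants
`c, C > 0` depending only on `d` such that for all `ℓ ≥ 1`, `z ∈ ℂ` with `Im z > 0` (with
`m_sc(z)` the unique root of `m² + z m + 1 = 0` with positive imaginary part), and all
`Δ, Δ'` with positive imaginary parts satisfying `ℓ² |Δ - m_sc(z)| ≤ c` and
`ℓ² |Δ' - m_sc(z)| ≤ c`, one has `|Y_ℓ(Δ,z) - Y_ℓ(Δ',z)| ≤ C ℓ |Δ - Δ'|`, where
`Y_ℓ(Δ,z) := ((H_{𝒴_ℓ} - z·I - Δ·𝕀∂)⁻¹)_{oo}`. -/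
theorem Y_lipschitz (d : ℕ) (hd : 3 ≤ d) :
    ∃ c C : ℝ, 0 < c ∧ 0 < C ∧
      ∀ (ℓ : ℕ), 1 ≤ ℓ →
      ∀ (z msc Δ Δ' : ℂ), 0 < z.im → msc ^ 2 + z * msc + 1 = 0 → 0 < msc.im →
        0 < Δ.im → 0 < Δ'.im →
        (ℓ : ℝ) ^ 2 * ‖Δ - msc‖ ≤ c →
        (ℓ : ℝ) ^ 2 * ‖Δ' - msc‖ ≤ c →
        ‖
            (((HmatY d ℓ - z • 1 - Δ • IbdY d ℓ)⁻¹) (rootY (d - 1) ℓ) (rootY (d - 1) ℓ) -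
              ((HmatY d ℓ - z • 1 - Δ' • IbdY d ℓ)⁻¹) (rootY (d - 1) ℓ) (rootY (d - 1) ℓ))‖ ≤
          C * (ℓ : ℝ) * ‖Δ - Δ'‖ := by
  refine ⟨1 / 4, 9, by norm_num, by norm_num, fun ℓ hℓ z msc Δ Δ' hz hmsc hmi hΔ hΔ' hc hc' => ?_⟩
  rw [resolvent_rootY_rootY (by omega) hz hΔ, resolvent_rootY_rootY (by omega) hz hΔ']
  have hℓR : (1 : ℝ) ≤ ℓ := by exact_mod_cast hℓ
  calc _ ≤ 9 * ‖Δ - Δ'‖ := norm_mobiusIter_sub_mobiusIter_le hz hΔ hΔ' hmsc hmi hℓ hc hc'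
    _ ≤ 9 * ℓ * ‖Δ - Δ'‖ := by nlinarith [norm_nonneg (Δ - Δ')]
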